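/- (Bound on the number of curves sharing a given extreme rank.) For every integer k ≥ 1, the number of curves attaining extreme rank exactly k satisfies #{i ∈ {1, …, s+1} : R_i = k} ≤ 2·|I|, where |I| is the number of points in I. -/

import Mathlib

open Finset

/-- The upward pointwise rank `R_i^↑(r) = #{j : T_j(r) ≤ T_i(r)}`. -/
noncomputable def upRank {s : ℕ} {ι : Type*} (T : Fin (s + 1) → ι → ℝ) (i : Fin (s + 1)) (r : ι) : ℕ :=
  {j : Fin (s + 1) | T j r ≤ T i r}.ncard

/-- The downward pointwise rank `R_i^↓(r) = #{j : T_j(r) ≥ T_i(r)}`. -/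
noncomputable def downRank {s : ℕ} {ι : Type*} (T : Fin (s + 1) → ι → ℝ) (i : Fin (s + 1)) (r : ι) : ℕ :=
  {j : Fin (s + 1) | T i r ≤ T j r}.ncard

/-- The two-sided pointwise rank `R_i^*(r) = min(R_i^↑(r), R_i^↓(r))`. -/
noncomputable def twoSidedRank {s : ℕ} {ι : Type*} (T : Fin (s + 1) → ι → ℝ) (i : Fin (s + 1)) (r : ι) : ℕ :=
  min (upRank T i r) (downRank T i r)

/-- The extreme rank `R_i = min_{r ∈ I} R_i^*(r)`. -/
noncomputable def extremeRank {s : ℕ} {ι : Type*} [Fintype ι] [Nonempty ι]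
    (T : Fin (s + 1) → ι → ℝ) (i : Fin (s + 1)) : ℕ :=
  univ.inf' univ_nonempty (fun r => twoSidedRank T i r)

/-- The rank count `N_{i,k} = #{r ∈ I : R_i^*(r) = k}`. -/
noncomputable def rankCount {s : ℕ} {ι : Type*} [Fintype ι]
    (T : Fin (s + 1) → ι → ℝ) (i : Fin (s + 1)) (k : ℕ) : ℕ :=
  {r : ι | twoSidedRank T i r = k}.ncard

/-- The reverse lexical strict order on rank count vectors
`N_i = (N_{i,1}, …, N_{i,K})`, `K = ⌊(s+2)/2⌋`: `N_i ≺ N_j` iff there exists `n ≤ K`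
with `N_{i,k} = N_{j,k}` for all `k < n` and `N_{i,n} > N_{j,n}`. -/
def rankCountLT {s : ℕ} {ι : Type*} [Fintype ι]
    (T : Fin (s + 1) → ι → ℝ) (i j : Fin (s + 1)) : Prop :=
  ∃ n : ℕ, 1 ≤ n ∧ n ≤ (s + 2) / 2 ∧
    (∀ k, 1 ≤ k → k < n → rankCount T i k = rankCount T j k) ∧
    rankCount T j n < rankCount T i n

/- At every point `r`, no ties make `i ↦ R_i^↑(r)` and `i ↦ R_i^↓(r)` injective, so at most two
curves have two-sided rank `k` at `r`. A curve of extreme rank `k` attains two-sided rank `k` at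
some point, hence there are at most `2 |I|` of them. -/

section Ranks

variable {s : ℕ} {ι : Type*} (T : Fin (s + 1) → ι → ℝ)

theorem upRank_lt_upRank {i j : Fin (s + 1)} {r : ι} (h : T i r < T j r) :
    upRank T i r < upRank T j r := by
  refine Set.ncard_lt_ncard ⟨fun x hx => le_trans hx h.le, fun hsub => ?_⟩ (Set.toFinite _)
  exact (hsub (le_refl (T j r))).not_gt h

theorem downRank_lt_downRank {i j : Fin (s + 1)} {r : ι} (h : T i r < T j r) :
    downRank T j r < downRank T i r := by
  refine Set.ncard_lt_ncard ⟨fun x hx => le_trans h.le hx, fun hsub => ?_⟩ (Set.toFinite _)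
  exact (hsub (le_refl (T i r))).not_gt h

variable {T} {r : ι}

theorem subsingleton_setOf_upRank_eq (hr : Pairwise fun i j => T i r ≠ T j r) (k : ℕ) :
    {i | upRank T i r = k}.Subsingleton := by
  intro i (hi : upRank T i r = k) j (hj : upRank T j r = k)
  by_contra hij
  rcases (hr hij).lt_or_gt with h | h
  · exact (upRank_lt_upRank T h).ne (hi.trans hj.symm)
  · exact (upRank_lt_upRank T h).ne (hj.trans hi.symm)

theorem subsingleton_setOf_downRank_eq (hr : Pairwise fun i j => T i r ≠ T j r) (k : ℕ) :
    {i | downRank T i r = k}.Subsingleton := by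
  intro i (hi : downRank T i r = k) j (hj : downRank T j r = k)
  by_contra hij
  rcases (hr hij).lt_or_gt with h | h
  · exact (downRank_lt_downRank T h).ne (hj.trans hi.symm)
  · exact (downRank_lt_downRank T h).ne (hi.trans hj.symm)

theorem ncard_setOf_twoSidedRank_eq_le_two (hr : Pairwise fun i j => T i r ≠ T j r) (k : ℕ) :
    {i | twoSidedRank T i r = k}.ncard ≤ 2 := by
  have hsub : {i | twoSidedRank T i r = k} ⊆ {i | upRank T i r = k} ∪ {i | downRank T i r = k} := by
    intro i (hi : min _ _ = k)
    rcases min_choice (upRank T i r) (downRank T i r) with h | h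
    · exact Or.inl (h.symm.trans hi)
    · exact Or.inr (h.symm.trans hi)
  calc {i | twoSidedRank T i r = k}.ncard
      ≤ ({i | upRank T i r = k} ∪ {i | downRank T i r = k}).ncard :=
        Set.ncard_le_ncard hsub (Set.toFinite _)
    _ ≤ {i | upRank T i r = k}.ncard + {i | downRank T i r = k}.ncard := Set.ncard_union_le _ _
    _ ≤ 1 + 1 := add_le_add
        (Set.ncard_le_one_iff_subsingleton.2 (subsingleton_setOf_upRank_eq hr k))
        (Set.ncard_le_one_iff_subsingleton.2 (subsingleton_setOf_downRank_eq hr k))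

theorem exists_twoSidedRank_eq_extremeRank [Fintype ι] [Nonempty ι] (i : Fin (s + 1)) :
    ∃ r, twoSidedRank T i r = extremeRank T i := by
  obtain ⟨r, -, hr⟩ := Finset.exists_mem_eq_inf' univ_nonempty (twoSidedRank T i)
  exact ⟨r, hr.symm⟩

theorem setOf_extremeRank_eq_subset [Fintype ι] [Nonempty ι] (k : ℕ) :
    {i | extremeRank T i = k} ⊆ ⋃ r, {i | twoSidedRank T i r = k} := by
  intro i (hi : extremeRank T i = k)
  obtain ⟨r, hr⟩ := exists_twoSidedRank_eq_extremeRank (T := T) i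
  exact Set.mem_iUnion.2 ⟨r, hr.trans hi⟩

end Ranks

theorem card_extremeRank_eq_le_general
    {s : ℕ} {ι : Type*} [Fintype ι] [Nonempty ι]
    (T : Fin (s + 1) → ι → ℝ)
    (hnoties : ∀ r : ι, ∀ i j : Fin (s + 1), i ≠ j → T i r ≠ T j r)
    (k : ℕ) :
    {i : Fin (s + 1) | extremeRank T i = k}.ncard ≤ 2 * Fintype.card ι := by
  calc {i | extremeRank T i = k}.ncard
      ≤ (⋃ r, {i | twoSidedRank T i r = k}).ncard :=
        Set.ncard_le_ncard (setOf_extremeRank_eq_subset k) (Set.toFinite _)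
    _ ≤ ∑ r, {i | twoSidedRank T i r = k}.ncard := Set.ncard_iUnion_le_of_fintype _
    _ ≤ ∑ _r : ι, 2 := Finset.sum_le_sum fun r _ =>
        ncard_setOf_twoSidedRank_eq_le_two (fun i j => hnoties r i j) k
    _ = 2 * Fintype.card ι := by rw [Finset.sum_const, Finset.card_univ, smul_eq_mul, mul_comm]

/-- **Bound on the number of curves sharing a given extreme rank.**
For every integer `k ≥ 1`, the number of curves attaining extreme rank exactly `k`
satisfies `#{i : R_i = k} ≤ 2·|I|`. -/
theorem card_extremeRank_eq_le
    {s : ℕ} (hs : 1 ≤ s) {ι : Type*} [Fintype ι] [Nonempty ι]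
    (T : Fin (s + 1) → ι → ℝ)
    (hnoties : ∀ r : ι, ∀ i j : Fin (s + 1), i ≠ j → T i r ≠ T j r)
    (k : ℕ) (hk : 1 ≤ k) :
    {i : Fin (s + 1) | extremeRank T i = k}.ncard ≤ 2 * Fintype.card ι :=
  card_extremeRank_eq_le_general T hnoties k
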